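/- For every m ≥ 9, the number 6 is not contained in any maximum (m,2)-shelf: if A ⊆ {1,...,m} satisfies o_p(A) ≤ 2 for all primes p, has maximal cardinality among such sets, then 6 ∉ A. -/

import Mathlib

/-!
If `q * r` lies in a maximum `(m,2)`-shelf `A`, then, since `q`, `q²`, `q * r` are three multiples
of `q`, one of `q`, `q²` is missing from `A`; likewise one of `r`, `r²`. Replacing `q * r` by these
two coprime prime powers keeps every `o_p` at most `2` and enlarges `A`.
-/

open Finset

def IsShelf (k : ℕ) (A : Finset ℕ) : Prop :=
  ∀ p : ℕ, p.Prime → #{a ∈ A | p ∣ a} ≤ k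

lemma IsShelf.exists_pow_notMem {A : Finset ℕ} {p a : ℕ} (hA : IsShelf 2 A) (hp : p.Prime)
    (ha : a ∈ A) (hpa : p ∣ a) (hap : a ≠ p) (hap2 : a ≠ p ^ 2) :
    ∃ i, 1 ≤ i ∧ i ≤ 2 ∧ p ^ i ∉ A := by
  by_contra! h
  have hsub : ({p, p ^ 2, a} : Finset ℕ) ⊆ {b ∈ A | p ∣ b} := by
    simp [insert_subset_iff, by simpa using h 1 le_rfl one_le_two, h 2 one_le_two le_rfl, ha, hpa]
  have hcard : #({p, p ^ 2, a} : Finset ℕ) = 3 :=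
    card_eq_three.mpr
      ⟨p, p ^ 2, a, (lt_self_pow₀ hp.one_lt one_lt_two).ne, hap.symm, hap2.symm, rfl⟩
  have := card_le_card hsub
  have := hA p hp
  omega

lemma card_filter_dvd_insert_insert_erase_le {A : Finset ℕ} {a x y p : ℕ} (ha : a ∈ A)
    (hx : p ∣ x → p ∣ a) (hy : p ∣ y → p ∣ a) (hxy : ¬(p ∣ x ∧ p ∣ y)) :
    #{b ∈ insert x (insert y (A.erase a)) | p ∣ b} ≤ #{b ∈ A | p ∣ b} := by
  rw [filter_insert, filter_insert, filter_erase]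
  by_cases hpa : p ∣ a
  · have := card_erase_of_mem (mem_filter.mpr ⟨ha, hpa⟩)
    have := card_pos.mpr ⟨a, mem_filter.mpr ⟨ha, hpa⟩⟩
    split_ifs <;> grind [card_insert_le]
  · simp only [mt hx hpa, mt hy hpa, if_false]
    exact card_le_card (erase_subset _ _)

lemma pow_mem_Icc_of_le {p i k m : ℕ} (hp : 0 < p) (hik : i ≤ k) (hkm : p ^ k ≤ m) :
    p ^ i ∈ Icc 1 m :=
  mem_Icc.mpr ⟨Nat.one_le_pow _ _ hp, (Nat.pow_le_pow_right hp hik).trans hkm⟩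

theorem mul_notMem_of_isShelf_maximal {m q r : ℕ} {A : Finset ℕ} (hq : q.Prime) (hr : r.Prime)
    (hqr : q ≠ r) (hqm : q ^ 2 ≤ m) (hrm : r ^ 2 ≤ m) (hAm : A ⊆ Icc 1 m) (hA : IsShelf 2 A)
    (hmax : ∀ B ⊆ Icc 1 m, IsShelf 2 B → #B ≤ #A) :
    q * r ∉ A := by
  intro hmem
  obtain ⟨i, -, hi2, hqi⟩ := hA.exists_pow_notMem hq hmem (dvd_mul_right q r)
    ((mul_eq_left₀ hq.ne_zero).not.mpr hr.ne_one)
    (by rw [sq]; exact fun h => hqr (mul_left_cancel₀ hq.ne_zero h).symm)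
  obtain ⟨j, hj1, hj2, hrj⟩ := hA.exists_pow_notMem hr hmem (dvd_mul_left r q)
    ((mul_eq_right₀ hr.ne_zero).not.mpr hq.ne_one)
    (by rw [sq]; exact fun h => hqr (mul_right_cancel₀ hr.ne_zero h))
  have hcop : Nat.Coprime (q ^ i) (r ^ j) := ((Nat.coprime_primes hq hr).mpr hqr).pow i j
  set B := insert (q ^ i) (insert (r ^ j) (A.erase (q * r)))
  have hB : IsShelf 2 B := fun p hp =>
    (card_filter_dvd_insert_insert_erase_le hmem
      (fun h => (hp.dvd_of_dvd_pow h).mul_right r) (fun h => (hp.dvd_of_dvd_pow h).mul_left q)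
      (fun ⟨h1, h2⟩ => hp.one_lt.ne' (Nat.eq_one_of_dvd_coprimes hcop h1 h2))).trans (hA p hp)
  have hBm : B ⊆ Icc 1 m := by
    simp only [B, insert_subset_iff]
    exact ⟨pow_mem_Icc_of_le hq.pos hi2 hqm, pow_mem_Icc_of_le hr.pos hj2 hrm,
      (erase_subset _ _).trans hAm⟩
  have hne : q ^ i ≠ r ^ j := fun h =>
    (Nat.one_lt_pow (n := j) (by omega) hr.one_lt).ne' ((Nat.coprime_self _).mp (h ▸ hcop))
  have hcard : #B = #A + 1 := by
    rw [card_insert_of_notMem (by simp [hne, hqi]), card_insert_of_notMem (by simp [hrj]),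
      card_erase_of_mem hmem]
    have := card_pos.mpr ⟨_, hmem⟩
    omega
  have := hmax B hBm hB
  omega

/-- For `m ≥ 9`, the number `6` belongs to no maximum `(m,2)`-shelf. -/
theorem six_not_in_maximum_shelf_two (m : ℕ) (hm : 9 ≤ m) (A : Finset ℕ)
    (hA : A ⊆ Finset.Icc 1 m)
    (hshelf : ∀ p : ℕ, p.Prime → (A.filter (fun a => p ∣ a)).card ≤ 2)
    (hmax : ∀ B : Finset ℕ, B ⊆ Finset.Icc 1 m →
      (∀ p : ℕ, p.Prime → (B.filter (fun a => p ∣ a)).card ≤ 2) →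
      B.card ≤ A.card) :
    6 ∉ A :=
  mul_notMem_of_isShelf_maximal Nat.prime_two Nat.prime_three (by decide) (by omega) (by omega)
    hA hshelf hmax
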